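/- For a finite group G and integer n ≥ 2, every prime subset of the Brandt semigroup B(G, n) has cardinality at least (n − 1)·|G|. -/

import Mathlib

/-- A nonempty subset `U` of a (multiplicative) semigroup is *prime* if
`a * b ∈ U` implies `a ∈ U` or `b ∈ U`. -/
def IsPrimeSubset {Γ : Type*} [Mul Γ] (U : Set Γ) : Prop :=
  U.Nonempty ∧ ∀ a b : Γ, a * b ∈ U → a ∈ U ∨ b ∈ U

/-- The Brandt semigroup `B(G, n)` over a group `G`: underlying set
`([n] × G × [n]) ∪ {0}`, encoded as `Option (Fin n × G × Fin n)` with `none`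
playing the role of the zero element `0`. -/
def Brandt (G : Type*) (n : ℕ) : Type _ := Option (Fin n × G × Fin n)

namespace Brandt

/-- The zero element `0` of the Brandt semigroup. -/
def zero {G : Type*} {n : ℕ} : Brandt G n := none

/-- The element `(i, a, j)` of the Brandt semigroup. -/
def elem {G : Type*} {n : ℕ} (i : Fin n) (a : G) (j : Fin n) : Brandt G n := some (i, a, j)

/-- Multiplication: `(i, a, j)(k, b, l) = (i, ab, l)` if `j = k` and `0` otherwise,
with `0` acting as a zero element. -/
def mul {G : Type*} [Group G] {n : ℕ} : Brandt G n → Brandt G n → Brandt G n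
  | none, _ => none
  | some _, none => none
  | some (i, a, j), some (k, b, l) => if j = k then some (i, a * b, l) else none

instance (G : Type*) [Group G] (n : ℕ) : Semigroup (Brandt G n) where
  mul := mul
  mul_assoc x y z := by
    show mul (mul x y) z = mul x (mul y z)
    rcases x with _ | ⟨i, a, j⟩ <;> rcases y with _ | ⟨k, b, l⟩ <;> rcases z with _ | ⟨m, c, p⟩ <;>
      (try by_cases h1 : j = k) <;> (try by_cases h2 : l = m) <;>
      first | rfl | (simp [mul, *, mul_assoc] <;> rfl)

instance (G : Type*) [Fintype G] (n : ℕ) : Fintype (Brandt G n) :=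
  inferInstanceAs (Fintype (Option (Fin n × G × Fin n)))

instance (G : Type*) [DecidableEq G] (n : ℕ) : DecidableEq (Brandt G n) :=
  inferInstanceAs (DecidableEq (Option (Fin n × G × Fin n)))

end Brandt

/-! If `0 ∈ U`, then for distinct indices `j ≠ k` every product `(i, a, j)(k, b, l)` is `0`, so
primality puts a whole column `{(i, a, j)}` or a whole row `{(k, b, l)}` into `U`; either has
`n|G|` elements. If `0 ∉ U`, pick `(i, a, j) ∈ U`; for each `k ≠ i` and `b ∈ G` the factorisation
`(i, a, j) = (i, b, k)(k, b⁻¹a, j)` puts one of the two factors into `U`, and these `2(n - 1)|G|`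
factors are pairwise distinct, so `U` has at least `(n - 1)|G|` elements. -/

theorem Set.natCard_le_ncard_of_injective {ι α : Type*} {U : Set α} (hU : U.Finite)
    (f : ι → α) (hf : Function.Injective f) (hfU : ∀ x, f x ∈ U) : Nat.card ι ≤ U.ncard := by
  rw [← Nat.card_coe_set_eq]
  have := hU.to_subtype
  exact Nat.card_le_card_of_injective (fun x => ⟨f x, hfU x⟩) fun x y h =>
    hf (congrArg Subtype.val h)

theorem Set.natCard_le_ncard_of_forall_mem_or_mem {ι α : Type*} {U : Set α} (hU : U.Finite)
    (f g : ι → α) (hf : Function.Injective f) (hg : Function.Injective g)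
    (hfg : ∀ x y, f x ≠ g y) (hfgU : ∀ x, f x ∈ U ∨ g x ∈ U) : Nat.card ι ≤ U.ncard := by
  classical
  refine U.natCard_le_ncard_of_injective hU (fun x => if f x ∈ U then f x else g x) ?_ ?_
  · intro x y hxy
    beta_reduce at hxy
    split_ifs at hxy
    exacts [hf hxy, (hfg x y hxy).elim, (hfg y x hxy.symm).elim, hg hxy]
  · intro x
    split_ifs with hx
    exacts [hx, (hfgU x).resolve_left hx]

namespace Brandt

variable {G : Type*} {n : ℕ}

instance [Finite G] : Finite (Brandt G n) :=
  inferInstanceAs (Finite (Option (Fin n × G × Fin n)))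

@[simp]
theorem elem_inj {i i' j j' : Fin n} {a a' : G} :
    elem i a j = elem i' a' j' ↔ i = i' ∧ a = a' ∧ j = j' := by
  show (some (i, a, j) : Option (Fin n × G × Fin n)) = some (i', a', j') ↔ _
  simp

theorem eq_zero_or_exists_eq_elem (x : Brandt G n) : x = zero ∨ ∃ i a j, x = elem i a j := by
  rcases x with _ | ⟨i, a, j⟩
  exacts [.inl rfl, .inr ⟨i, a, j, rfl⟩]

variable [Group G]

theorem elem_mul_elem (i : Fin n) (a : G) (j k : Fin n) (b : G) (l : Fin n) :
    elem i a j * elem k b l = if j = k then elem i (a * b) l else zero := by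
  show mul (some (i, a, j)) (some (k, b, l)) = _
  simp only [mul, elem, zero]

theorem elem_mul_elem_self (i : Fin n) (a : G) (j : Fin n) (b : G) (l : Fin n) :
    elem i a j * elem j b l = elem i (a * b) l := by
  simp [elem_mul_elem]

theorem elem_mul_elem_of_ne {j k : Fin n} (i : Fin n) (a b : G) (l : Fin n) (hjk : j ≠ k) :
    elem i a j * elem k b l = zero := by
  simp [elem_mul_elem, hjk]

variable {U : Set (Brandt G n)}

theorem _root_.IsPrimeSubset.column_subset_or_row_subset (hU : IsPrimeSubset U) (h0 : zero ∈ U)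
    {j k : Fin n} (hjk : j ≠ k) : (∀ i a, elem i a j ∈ U) ∨ ∀ b l, elem k b l ∈ U := by
  by_contra! ⟨⟨i, a, hi⟩, ⟨b, l, hl⟩⟩
  exact (hU.2 _ _ ((elem_mul_elem_of_ne i a b l hjk).symm ▸ h0)).elim hi hl

theorem _root_.IsPrimeSubset.elem_mem_or_elem_mem (hU : IsPrimeSubset U) {i j : Fin n} {a : G}
    (ha : elem i a j ∈ U) (k : Fin n) (b : G) : elem i b k ∈ U ∨ elem k (b⁻¹ * a) j ∈ U :=
  hU.2 _ _ (by rwa [elem_mul_elem_self, mul_inv_cancel_left])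

theorem _root_.IsPrimeSubset.card_mul_le_ncard_of_zero_mem [Finite G] (hU : IsPrimeSubset U)
    (h0 : zero ∈ U) {j k : Fin n} (hjk : j ≠ k) : n * Nat.card G ≤ U.ncard := by
  suffices Nat.card (Fin n × G) ≤ U.ncard by simpa using this
  rcases hU.column_subset_or_row_subset h0 hjk with hcol | hrow
  · exact U.natCard_le_ncard_of_injective U.toFinite (fun x => elem x.1 x.2 j)
      (fun x y h => Prod.ext (elem_inj.1 h).1 (elem_inj.1 h).2.1) fun x => hcol _ _
  · exact U.natCard_le_ncard_of_injective U.toFinite (fun x => elem k x.2 x.1)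
      (fun x y h => Prod.ext (elem_inj.1 h).2.2 (elem_inj.1 h).2.1) fun x => hrow _ _

theorem _root_.IsPrimeSubset.card_mul_le_ncard_of_zero_notMem [Finite G] (hU : IsPrimeSubset U)
    (h0 : zero ∉ U) : (n - 1) * Nat.card G ≤ U.ncard := by
  obtain ⟨u, hu⟩ := hU.1
  obtain ⟨i, a, j, rfl⟩ := (eq_zero_or_exists_eq_elem u).resolve_left (by rintro rfl; exact h0 hu)
  suffices Nat.card ({k : Fin n // k ≠ i} × G) ≤ U.ncard by
    simpa [Nat.card_eq_fintype_card, Set.card_ne_eq] using this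
  refine U.natCard_le_ncard_of_forall_mem_or_mem U.toFinite (fun x => elem i x.2 x.1)
    (fun x => elem x.1 (x.2⁻¹ * a) j) ?_ ?_ ?_ fun x => hU.elem_mem_or_elem_mem hu _ _
  · exact fun x y h => Prod.ext (Subtype.ext (elem_inj.1 h).2.2) (elem_inj.1 h).2.1
  · exact fun x y h => Prod.ext (Subtype.ext (elem_inj.1 h).1) (inv_injective
      (mul_right_cancel (elem_inj.1 h).2.1))
  · exact fun x y h => y.1.2 (elem_inj.1 h).1.symm

end Brandt

theorem brandt_prime_subset_card_lower_bound_general {G : Type*} [Group G] [Fintype G]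
    (n : ℕ) (U : Set (Brandt G n)) (hU : IsPrimeSubset U) :
    (n - 1) * Fintype.card G ≤ U.ncard := by
  rw [← Nat.card_eq_fintype_card]
  by_cases h0 : Brandt.zero ∈ U
  · rcases subsingleton_or_nontrivial (Fin n) with hn | hn
    · rw [Fin.subsingleton_iff_le_one] at hn
      simp [show n - 1 = 0 by omega]
    · obtain ⟨j, k, hjk⟩ := exists_pair_ne (Fin n)
      exact (Nat.mul_le_mul_right _ (n.sub_le 1)).trans
        (hU.card_mul_le_ncard_of_zero_mem h0 hjk)
  · exact hU.card_mul_le_ncard_of_zero_notMem h0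

/-- For a finite group `G` and `n ≥ 2`, every prime subset of the Brandt semigroup
`B(G, n)` has cardinality at least `(n - 1)|G|`. -/
theorem brandt_prime_subset_card_lower_bound {G : Type*} [Group G] [Fintype G]
    (n : ℕ) (hn : 2 ≤ n) (U : Set (Brandt G n)) (hU : IsPrimeSubset U) :
    (n - 1) * Fintype.card G ≤ U.ncard :=
  brandt_prime_subset_card_lower_bound_general n U hU
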